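/- For every even positive integer M ≥ 4, the following identity of rational functions in t, w, q holds: ((1-q)(1-q^M)/((1-t*q)(1-w*q^M))) * (1 + q/(1-q) + q^4/((1-q)(1-q^2))) = 1 + q*t/(1-t*q) + (q^4/((1-t*q)(1-w*q^M))) * ([M/2]_{q^2} + (w-1)*q^{M-4}), where [M/2]_{q^2} = 1 + q^2 + q^4 + \cdots + q^{M-2}. -/

import Mathlib

/-!
Both sides simplify to `(1 - q^M)(1 - q^2 + q^4) / ((1 - tq)(1 - wq^M)(1 - q^2))`: on the left
`1 + q/(1-q) = 1/(1-q)`, and on the right `1 + qt/(1-tq) = 1/(1-tq)` while, since `M` is even,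
`[M/2]_{q^2} = (1 - q^M)/(1 - q^2)` and the term `(w - 1) q^{M-4}` cancels the `w q^M` in
`1 - w q^M`. All denominators are nonzero in `ℚ(t, w, q)` because their constant coefficient is `1`.
-/

noncomputable section

open MvPolynomial Finset

/-- The field of rational functions in `t`, `w` and `q` over `ℚ`. -/
abbrev F : Type := FractionRing (MvPolynomial (Fin 3) ℚ)

def t : F := algebraMap (MvPolynomial (Fin 3) ℚ) F (X 0)
def w : F := algebraMap (MvPolynomial (Fin 3) ℚ) F (X 1)
def q : F := algebraMap (MvPolynomial (Fin 3) ℚ) F (X 2)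

theorem sum_range_half_pow_two_mul {K : Type*} [Field K] {x : K} (hx : x ^ 2 ≠ 1) {M : ℕ}
    (hM : Even M) : ∑ i ∈ range (M / 2), x ^ (2 * i) = (1 - x ^ M) / (1 - x ^ 2) := by
  simp_rw [pow_mul]
  rw [geom_sum_eq hx, ← pow_mul, Nat.mul_div_cancel' hM.two_dvd, ← neg_div_neg_eq, neg_sub,
    neg_sub]

theorem one_sub_algebraMap_ne_zero {σ R K : Type*} [CommRing R] [IsDomain R] [CommRing K]
    [Algebra (MvPolynomial σ R) K] [IsFractionRing (MvPolynomial σ R) K]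
    {p : MvPolynomial σ R} (hp : constantCoeff p = 0) :
    1 - algebraMap (MvPolynomial σ R) K p ≠ 0 := by
  rw [← map_one (algebraMap (MvPolynomial σ R) K), ← map_sub, Ne,
    IsFractionRing.to_map_eq_zero_iff]
  intro h
  simpa [hp] using congrArg constantCoeff h

theorem two_part_identity_of_geom {K : Type*} [Field K] {x t w : K} {M : ℕ} (hM : 4 ≤ M)
    (h1 : 1 - x ≠ 0) (h2 : 1 - x ^ 2 ≠ 0) (ht : 1 - t * x ≠ 0) (hw : 1 - w * x ^ M ≠ 0) :
    ((1 - x) * (1 - x ^ M) / ((1 - t * x) * (1 - w * x ^ M))) *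
        (1 + x / (1 - x) + x ^ 4 / ((1 - x) * (1 - x ^ 2)))
      = 1 + x * t / (1 - t * x)
        + (x ^ 4 / ((1 - t * x) * (1 - w * x ^ M))) *
          ((1 - x ^ M) / (1 - x ^ 2) + (w - 1) * x ^ (M - 4)) := by
  obtain ⟨n, rfl⟩ := Nat.exists_eq_add_of_le' hM
  rw [Nat.add_sub_cancel, pow_add] at *
  generalize x ^ n = y at *
  have ht' : 1 - x * t ≠ 0 := by rwa [mul_comm]
  have hw' : 1 - x ^ 4 * y * w ≠ 0 := by convert hw using 2; ring
  field_simp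
  ring

/-- The first-Rogers-Ramanujan analogue of the two-part lemma, for even `M ≥ 4`.
Here `[M/2]_{q²} = 1 + q² + ⋯ + q^{M-2}`. -/
theorem stmt5 (M : ℕ) (hM : 4 ≤ M) (hME : Even M) :
    ((1 - q) * (1 - q ^ M) / ((1 - t * q) * (1 - w * q ^ M))) *
        (1 + q / (1 - q) + q ^ 4 / ((1 - q) * (1 - q ^ 2)))
      = 1 + q * t / (1 - t * q)
        + (q ^ 4 / ((1 - t * q) * (1 - w * q ^ M))) *
          ((∑ i ∈ range (M / 2), q ^ (2 * i)) + (w - 1) * q ^ (M - 4)) := by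
  have h1 : (1 : F) - q ≠ 0 := one_sub_algebraMap_ne_zero (by simp)
  have h2 : (1 : F) - q ^ 2 ≠ 0 := by
    rw [q, ← map_pow]
    exact one_sub_algebraMap_ne_zero (by simp)
  have ht : (1 : F) - t * q ≠ 0 := by
    rw [t, q, ← map_mul]
    exact one_sub_algebraMap_ne_zero (by simp)
  have hw : (1 : F) - w * q ^ M ≠ 0 := by
    rw [w, q, ← map_pow, ← map_mul]
    exact one_sub_algebraMap_ne_zero (by simp)
  rw [sum_range_half_pow_two_mul (fun h ↦ h2 (by rw [h, sub_self])) hME]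
  exact two_part_identity_of_geom hM h1 h2 ht hw
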